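/- The quantity z_k = ∑_{l=2}^∞ l(l+1)·c(l,k) satisfies z_k = O(1/k); precisely, there is a constant C > 0 such that 0 ≤ z_k ≤ C/k for all integers k ≥ 1. -/

import Mathlib

open scoped Classical

/-- The constants `c(l,k)`: `c(l,0) = c(0,k) = 0`,
`c(1,k) = (2k²+14k)/((k+1)(k+2)(k+3)(k+4))` for `k ≥ 1`, and for `l > 1`, `k > 0`,
`c(l,k) = c(l,k-1)·(l+k-1)/(2l+k+2) + c(l-1,k)·(l-1)/(2l+k+2)`. -/
noncomputable def c : ℕ → ℕ → ℝ
  | _, 0 => 0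
  | 0, _ => 0
  | 1, k + 1 =>
      (2 * ((k : ℝ) + 1) ^ 2 + 14 * ((k : ℝ) + 1)) /
        (((k : ℝ) + 2) * ((k : ℝ) + 3) * ((k : ℝ) + 4) * ((k : ℝ) + 5))
  | l + 2, k + 1 =>
      c (l + 2) k * ((l : ℝ) + (k : ℝ) + 2) / (2 * (l : ℝ) + (k : ℝ) + 7) +
      c (l + 1) (k + 1) * ((l : ℝ) + 1) / (2 * (l : ℝ) + (k : ℝ) + 7)
termination_by l k => (l, k)

/-!
Weight the coefficients by `weight l k = (l² + l + 2)(l + k + 1)² / (k + 1)²` and let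
`netWeight l k` be `weight l k` minus the weight that the recursion carries from `c(l, k)` on to
`c(l + 1, k)`. Summing the recursion against these weights, the sums
`S k = ∑_{l ≥ 2} netWeight l k · c(l, k)` satisfy
`S (k + 1) ≤ b (k + 1) + (k + 3)/(k + 4) · S k`, where the boundary term `b (k + 1)`, coming from
`c(1, k + 1)`, is `O(k⁻³)`; more precisely `(k + 4) b (k + 1) ≤ 16/(k + 1) - 16/(k + 2)`. So
`(k + 3) S k` telescopes to at most `16`, and `l(l + 1) ≤ netWeight l k` gives
`z_k ≤ S k ≤ 16/k`.
-/

lemma c_zero_right (l : ℕ) : c l 0 = 0 := by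
  rcases l with _ | _ | l <;> simp [c]

lemma c_one_succ (k : ℕ) : c 1 (k + 1) =
    (2 * ((k : ℝ) + 1) ^ 2 + 14 * ((k : ℝ) + 1)) /
      (((k : ℝ) + 2) * ((k : ℝ) + 3) * ((k : ℝ) + 4) * ((k : ℝ) + 5)) := by
  simp [c]

lemma c_add_two_succ (l k : ℕ) : c (l + 2) (k + 1) =
    c (l + 2) k * ((l : ℝ) + k + 2) / (2 * (l : ℝ) + k + 7) +
      c (l + 1) (k + 1) * ((l : ℝ) + 1) / (2 * (l : ℝ) + k + 7) := by
  rw [c]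

lemma c_nonneg (l k : ℕ) : 0 ≤ c l k := by
  induction l, k using c.induct with
  | case1 l => rw [c_zero_right]
  | case2 k hk => obtain ⟨k, rfl⟩ := Nat.exists_eq_succ_of_ne_zero hk; simp [c]
  | case3 k => rw [c_one_succ]; positivity
  | case4 l k ih₁ ih₂ => rw [c_add_two_succ]; positivity

lemma c_le_geometric (l k : ℕ) : c l k ≤ (2 / 3 : ℝ) ^ l * 2 ^ k := by
  induction l, k using c.induct with
  | case1 l => rw [c_zero_right]; positivity
  | case2 k hk => obtain ⟨k, rfl⟩ := Nat.exists_eq_succ_of_ne_zero hk; simp [c]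
  | case3 k =>
    have h₁ : c 1 (k + 1) ≤ 1 := by
      rw [c_one_succ, div_le_one (by positivity)]
      nlinarith [k.cast_nonneg (α := ℝ)]
    have h₂ : (1 : ℝ) ≤ 2 ^ k := one_le_pow₀ (by norm_num)
    calc c 1 (k + 1) ≤ 1 := h₁
      _ ≤ (2 / 3) ^ 1 * 2 ^ (k + 1) := by rw [pow_one, pow_succ]; linarith
  | case4 l k ih₁ ih₂ =>
    rw [c_add_two_succ, ← add_div, div_le_iff₀ (by positivity)]
    have hl : (0 : ℝ) ≤ l := l.cast_nonneg
    have hk : (0 : ℝ) ≤ k := k.cast_nonneg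
    calc c (l + 2) k * ((l : ℝ) + k + 2) + c (l + 1) (k + 1) * ((l : ℝ) + 1)
        ≤ (2 / 3) ^ (l + 2) * 2 ^ k * ((l : ℝ) + k + 2)
          + (2 / 3) ^ (l + 1) * 2 ^ (k + 1) * ((l : ℝ) + 1) := by gcongr
      _ = (2 / 3) ^ (l + 2) * 2 ^ k * (4 * l + k + 5) := by ring
      _ ≤ (2 / 3) ^ (l + 2) * 2 ^ k * (2 * (2 * l + k + 7)) := by gcongr; linarith
      _ = (2 / 3) ^ (l + 2) * 2 ^ (k + 1) * (2 * l + k + 7) := by ring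

lemma summable_pow_mul_c (s k : ℕ) :
    Summable fun n : ℕ => ((n : ℝ) + s + 2) ^ 4 * c (n + s) k := by
  have hgeom : Summable fun l : ℕ => ((l : ℝ) + 2) ^ 4 * (2 / 3 : ℝ) ^ l := by
    refine (((summable_nat_add_iff 2).mpr (summable_pow_mul_geometric_of_norm_lt_one (R := ℝ) 4
      (r := 2 / 3) (by norm_num [abs_of_pos]))).mul_left (9 / 4)).congr fun l => ?_
    push_cast
    ring
  have hc : Summable fun l : ℕ => ((l : ℝ) + 2) ^ 4 * c l k :=
    (hgeom.mul_right (2 ^ k)).of_nonneg_of_le (fun l => by have := c_nonneg l k; positivity)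
      fun l => by rw [mul_assoc]; gcongr; exact c_le_geometric l k
  refine ((summable_nat_add_iff s).mpr hc).congr fun n => ?_
  push_cast
  ring

lemma summable_of_le_pow_mul_c {f : ℕ → ℝ} (s k : ℕ) (A : ℝ) (h₀ : ∀ n, 0 ≤ f n)
    (h : ∀ n, f n ≤ A * ((n : ℝ) + s + 2) ^ 4 * c (n + s) k) : Summable f :=
  ((summable_pow_mul_c s k).mul_left A).of_nonneg_of_le h₀ fun n => (h n).trans_eq (mul_assoc ..)

lemma tsum_add_sub_succ {G : Type*} [AddCommGroup G] [TopologicalSpace G]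
    [IsTopologicalAddGroup G] [T2Space G] {f g : ℕ → G} (hf : Summable f) (hg : Summable g) :
    ∑' n, (f n + (g n - g (n + 1))) = ∑' n, f n + g 0 := by
  have hg' : Summable fun n => g (n + 1) := (summable_nat_add_iff 1).mpr hg
  rw [hf.tsum_add (hg.sub hg'), hg.tsum_sub hg', hg.tsum_eq_zero_add]
  abel

noncomputable def weight (l k : ℕ) : ℝ :=
  ((l : ℝ) ^ 2 + l + 2) * ((l : ℝ) + k + 1) ^ 2 / ((k : ℝ) + 1) ^ 2

noncomputable def netWeight (l k : ℕ) : ℝ :=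
  weight l k - weight (l + 1) k * l / (2 * l + k + 4)

lemma weight_nonneg (l k : ℕ) : 0 ≤ weight l k := by
  unfold weight; positivity

lemma weight_le (l k : ℕ) : weight l k ≤ 2 * ((l : ℝ) + 1) ^ 4 := by
  have hl : (0 : ℝ) ≤ l := l.cast_nonneg
  have hk : (0 : ℝ) ≤ k := k.cast_nonneg
  have hratio : ((l : ℝ) + k + 1) / ((k : ℝ) + 1) ≤ (l : ℝ) + 1 := by
    rw [div_le_iff₀ (by positivity)]; nlinarith
  calc weight l k = ((l : ℝ) ^ 2 + l + 2) * (((l : ℝ) + k + 1) / ((k : ℝ) + 1)) ^ 2 := by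
        rw [weight, div_pow, mul_div_assoc]
    _ ≤ (2 * ((l : ℝ) + 1) ^ 2) * ((l : ℝ) + 1) ^ 2 := by gcongr; nlinarith
    _ = 2 * ((l : ℝ) + 1) ^ 4 := by ring

lemma netWeight_le_weight (l k : ℕ) : netWeight l k ≤ weight l k := by
  have := weight_nonneg (l + 1) k
  unfold netWeight
  have : 0 ≤ weight (l + 1) k * l / (2 * l + k + 4) := by positivity
  linarith

lemma mul_le_netWeight (n k : ℕ) : ((n : ℝ) + 2) * ((n : ℝ) + 3) ≤ netWeight (n + 2) k := by
  rw [← sub_nonneg, netWeight, weight, weight]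
  push_cast
  field_simp
  ring_nf
  positivity

lemma weight_succ_mul_le_netWeight (n k : ℕ) :
    weight (n + 2) (k + 1) * (((n : ℝ) + k + 2) / (2 * n + k + 7)) ≤
      ((k : ℝ) + 3) / (k + 4) * netWeight (n + 2) k := by
  rw [← sub_nonneg, netWeight, weight, weight, weight]
  push_cast
  field_simp
  ring_nf
  positivity

lemma weight_two_mul_c_one_le (k : ℕ) :
    ((k : ℝ) + 4) * (weight 2 (k + 1) * c 1 (k + 1) / ((k : ℝ) + 7)) ≤
      16 / ((k : ℝ) + 1) - 16 / ((k : ℝ) + 2) := by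
  rw [← sub_nonneg, c_one_succ, weight]
  push_cast
  field_simp
  ring_nf
  positivity

lemma weight_le_pow (n s k : ℕ) (hs : 1 ≤ s) :
    weight (n + 2) k ≤ 2 * ((n : ℝ) + s + 2) ^ 4 := by
  have : (1 : ℝ) ≤ s := by exact_mod_cast hs
  refine (weight_le _ _).trans (mul_le_mul_of_nonneg_left ?_ (by norm_num))
  exact pow_le_pow_left₀ (by positivity) (by push_cast; linarith) 4

lemma summable_weight_mul_c (k' s k : ℕ) (hs : 1 ≤ s) {r : ℕ → ℝ} (hr₀ : ∀ n, 0 ≤ r n)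
    (hr₁ : ∀ n, r n ≤ 1) : Summable fun n => weight (n + 2) k' * r n * c (n + s) k :=
  summable_of_le_pow_mul_c s k 2
    (fun n => mul_nonneg (mul_nonneg (weight_nonneg _ _) (hr₀ n)) (c_nonneg _ _)) fun n =>
    mul_le_mul_of_nonneg_right ((mul_le_of_le_one_right (weight_nonneg _ _) (hr₁ n)).trans
      (weight_le_pow n s k' hs)) (c_nonneg _ _)

lemma summable_netWeight_mul_c (k : ℕ) :
    Summable fun n : ℕ => netWeight (n + 2) k * c (n + 2) k :=
  summable_of_le_pow_mul_c 2 k 2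
    (fun n => mul_nonneg ((by positivity : (0 : ℝ) ≤ _).trans (mul_le_netWeight n k))
      (c_nonneg _ _)) fun n =>
    mul_le_mul_of_nonneg_right ((netWeight_le_weight _ _).trans (weight_le_pow n 2 k (by norm_num)))
      (c_nonneg _ _)

lemma summable_weight_mul_c_pred (k : ℕ) : Summable fun n : ℕ =>
    weight (n + 2) (k + 1) * (((n : ℝ) + k + 2) / (2 * n + k + 7)) * c (n + 2) k :=
  summable_weight_mul_c _ 2 k (by norm_num) (fun n => by positivity)
    fun n => div_le_one_of_le₀ (by linarith) (by positivity)

noncomputable def weightedSum (k : ℕ) : ℝ := ∑' n : ℕ, netWeight (n + 2) k * c (n + 2) k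

lemma weightedSum_succ (k : ℕ) : weightedSum (k + 1) =
    ∑' n : ℕ, weight (n + 2) (k + 1) * (((n : ℝ) + k + 2) / (2 * n + k + 7)) * c (n + 2) k +
      weight 2 (k + 1) * c 1 (k + 1) / ((k : ℝ) + 7) := by
  -- the share of `c (n + 1) (k + 1)` in `c (n + 2) (k + 1)`; it telescopes
  set g : ℕ → ℝ := fun n => weight (n + 2) (k + 1) * (((n : ℝ) + 1) / (2 * n + k + 7)) *
    c (n + 1) (k + 1)
  have hg : Summable g := summable_weight_mul_c _ 1 _ le_rfl (fun n => by positivity)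
    fun n => div_le_one_of_le₀ (by linarith) (by positivity)
  have hterm (n : ℕ) : netWeight (n + 2) (k + 1) * c (n + 2) (k + 1) =
      weight (n + 2) (k + 1) * (((n : ℝ) + k + 2) / (2 * n + k + 7)) * c (n + 2) k +
        (g n - g (n + 1)) := by
    simp only [g, netWeight, c_add_two_succ]
    push_cast
    ring
  have hg0 : g 0 = weight 2 (k + 1) * c 1 (k + 1) / ((k : ℝ) + 7) := by
    simp only [g]
    push_cast
    ring
  rw [weightedSum, tsum_congr hterm, tsum_add_sub_succ (summable_weight_mul_c_pred k) hg, hg0]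

lemma weightedSum_succ_le (k : ℕ) : weightedSum (k + 1) ≤
    weight 2 (k + 1) * c 1 (k + 1) / ((k : ℝ) + 7) +
      ((k : ℝ) + 3) / (k + 4) * weightedSum k := by
  rw [weightedSum_succ, add_comm, weightedSum, ← tsum_mul_left]
  refine (add_le_add_iff_left _).mpr ((summable_weight_mul_c_pred k).tsum_le_tsum (fun n => ?_)
    ((summable_netWeight_mul_c k).mul_left _))
  rw [← mul_assoc]
  exact mul_le_mul_of_nonneg_right (weight_succ_mul_le_netWeight n k) (c_nonneg _ _)

lemma weightedSum_zero : weightedSum 0 = 0 := by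
  simp [weightedSum, c_zero_right]

lemma mul_weightedSum_le (k : ℕ) :
    ((k : ℝ) + 3) * weightedSum k ≤ 16 - 16 / ((k : ℝ) + 1) := by
  induction k with
  | zero => norm_num [weightedSum_zero]
  | succ k ih =>
    have hrec :=
      mul_le_mul_of_nonneg_left (weightedSum_succ_le k) (by positivity : (0 : ℝ) ≤ k + 4)
    have hb := weight_two_mul_c_one_le k
    have hk : ((k : ℝ) + 4) * (((k : ℝ) + 3) / (k + 4) * weightedSum k) =
        ((k : ℝ) + 3) * weightedSum k := by
      field_simp
    rw [Nat.cast_succ, show (k : ℝ) + 1 + 1 = k + 2 by ring,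
      show (k : ℝ) + 1 + 3 = k + 4 by ring]
    rw [mul_add, hk] at hrec
    linarith

/-- `z_k = ∑_{l=2}^∞ l(l+1)·c(l,k)` is a convergent series and satisfies
`0 ≤ z_k ≤ C/k` for an absolute constant `C > 0` and all `k ≥ 1`. -/
theorem z_bound :
    ∃ C : ℝ, 0 < C ∧ ∀ k : ℕ, 1 ≤ k →
      Summable (fun l : ℕ => ((l : ℝ) + 2) * ((l : ℝ) + 3) * c (l + 2) k) ∧
      0 ≤ ∑' l : ℕ, ((l : ℝ) + 2) * ((l : ℝ) + 3) * c (l + 2) k ∧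
      (∑' l : ℕ, ((l : ℝ) + 2) * ((l : ℝ) + 3) * c (l + 2) k) ≤ C / (k : ℝ) := by
  refine ⟨16, by norm_num, fun k hk₁ => ?_⟩
  have hk : (1 : ℝ) ≤ k := by exact_mod_cast hk₁
  have hnonneg (n : ℕ) : 0 ≤ ((n : ℝ) + 2) * ((n : ℝ) + 3) * c (n + 2) k := by
    have := c_nonneg (n + 2) k
    positivity
  have hle (n : ℕ) : ((n : ℝ) + 2) * ((n : ℝ) + 3) * c (n + 2) k ≤
      netWeight (n + 2) k * c (n + 2) k :=
    mul_le_mul_of_nonneg_right (mul_le_netWeight n k) (c_nonneg _ _)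
  have hsum := (summable_netWeight_mul_c k).of_nonneg_of_le hnonneg hle
  refine ⟨hsum, tsum_nonneg hnonneg, ?_⟩
  calc ∑' n : ℕ, ((n : ℝ) + 2) * ((n : ℝ) + 3) * c (n + 2) k
      ≤ weightedSum k := hsum.tsum_le_tsum hle (summable_netWeight_mul_c k)
    _ ≤ 16 / ((k : ℝ) + 3) := by
      rw [le_div_iff₀ (by positivity), mul_comm]
      linarith [mul_weightedSum_le k, (by positivity : 0 < 16 / ((k : ℝ) + 1))]
    _ ≤ 16 / (k : ℝ) := by gcongr; linarith
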